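/- arXiv:1405.7923 — 2 statements merged into one kernel-verified Lean document; each statement's English description precedes it below -/
import Mathlib

section
/- Let L be an image-finite labelled transition system and let B, B' be sets of pairs of states of L such that B ⊐ B' (B' is a minimal expansion for B) and LeastEqLev(B) < ω. Then LeastEqLev(B) > LeastEqLev(B'). -/
/-- A labelled transition system with states `S` and actions `A`. -/
structure LTS (S : Type*) (A : Type*) where
  Tr : A → S → S → Prop

namespace LTS

variable {S A : Type*}

/-- An LTS is image-finite if each state has finitely many `a`-successors. -/
def ImageFinite (L : LTS S A) : Prop := ∀ a s, {t | L.Tr a s t}.Finite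

/-- A set `B` of pairs of states covers the pair `p`. -/
def Covers (L : LTS S A) (B : Set (S × S)) (p : S × S) : Prop :=
  (∀ a s', L.Tr a p.1 s' → ∃ t', L.Tr a p.2 t' ∧ (s', t') ∈ B) ∧
  (∀ a t', L.Tr a p.2 t' → ∃ s', L.Tr a p.1 s' ∧ (s', t') ∈ B)

/-- `B'` covers the set `B` (i.e., covers each of its pairs). -/
def CoversSet (L : LTS S A) (B' B : Set (S × S)) : Prop := ∀ p ∈ B, L.Covers B' p

/-- `B ⊐ B'`: `B'` is a minimal expansion for `B`. -/
def MinExp (L : LTS S A) (B B' : Set (S × S)) : Prop :=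
  L.CoversSet B' B ∧ ∀ B'', B'' ⊂ B' → ¬ L.CoversSet B'' B

/-- The stratified equivalences: `∼_0` is everything, `∼_{k+1}` are the pairs covered by `∼_k`. -/
def simN (L : LTS S A) : ℕ → Set (S × S)
  | 0 => Set.univ
  | k + 1 => {p | L.Covers (L.simN k) p}

/-- `eqlevel(s,t) ∈ ℕ ∪ {ω}`: the largest `e` with `s ∼_e t` (`⊤` plays the role of `ω`,
meaning `s ∼_k t` for all `k ∈ ℕ`). -/
noncomputable def eqlevel (L : LTS S A) (s t : S) : ℕ∞ :=
  sSup {e : ℕ∞ | ∃ k : ℕ, e = (k : ℕ∞) ∧ (s, t) ∈ L.simN k}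

/-- `LeastEqLev(B) = min {eqlevel(s,t) | (s,t) ∈ B}`, with `min ∅ = ω = ⊤`. -/
noncomputable def leastEqLev (L : LTS S A) (B : Set (S × S)) : ℕ∞ :=
  sInf {e : ℕ∞ | ∃ p ∈ B, e = L.eqlevel p.1 p.2}

/-- `B` is a bisimulation if it covers itself. -/
def Bisimulation (L : LTS S A) (B : Set (S × S)) : Prop := L.CoversSet B B

/-- `s ∼ t`: some bisimulation contains `(s,t)`. -/
def Bisim (L : LTS S A) (s t : S) : Prop := ∃ B, L.Bisimulation B ∧ (s, t) ∈ B

end LTS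

/-!
If every pair of `B'` lies in `∼_n`, then `B'` covering `B` puts every pair of `B` in
`∼_{n+1}`. Hence `LeastEqLev(B) ≥ LeastEqLev(B') + 1` whenever the latter is finite, and when
`LeastEqLev(B) = n` is finite this forces `LeastEqLev(B') < n`.
-/

namespace LTS

variable {S A : Type*} (L : LTS S A)

lemma covers_mono {B C : Set (S × S)} (h : B ⊆ C) {p : S × S} (hp : L.Covers B p) :
    L.Covers C p :=
  ⟨fun a s' hs => (hp.1 a s' hs).imp fun _ ⟨ht, hb⟩ => ⟨ht, h hb⟩,
   fun a t' ht => (hp.2 a t' ht).imp fun _ ⟨hs, hb⟩ => ⟨hs, h hb⟩⟩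

lemma simN_antitone : Antitone L.simN := by
  refine antitone_nat_of_succ_le fun k => ?_
  induction k with
  | zero => exact Set.subset_univ _
  | succ k ih => exact fun _ hp => L.covers_mono ih hp

lemma mem_simN_iff_le_eqlevel {s t : S} {n : ℕ} :
    (s, t) ∈ L.simN n ↔ (n : ℕ∞) ≤ L.eqlevel s t := by
  refine ⟨fun h => le_sSup ⟨n, rfl, h⟩, fun h => ?_⟩
  cases n with
  | zero => exact Set.mem_univ _
  | succ m =>
    by_contra hn
    have hbound : L.eqlevel s t ≤ m := by
      refine sSup_le ?_
      rintro e ⟨k, rfl, hk⟩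
      have hkm : k < m + 1 := lt_of_not_ge fun hmk => hn (L.simN_antitone hmk hk)
      exact_mod_cast Nat.le_of_lt_succ hkm
    exact absurd (h.trans hbound) (by norm_cast; omega)

lemma le_leastEqLev_iff {B : Set (S × S)} {n : ℕ} :
    (n : ℕ∞) ≤ L.leastEqLev B ↔ B ⊆ L.simN n := by
  simp only [leastEqLev, le_sInf_iff, Set.mem_ofPred_eq, forall_exists_index, and_imp]
  refine ⟨fun h p hp => L.mem_simN_iff_le_eqlevel.2 (h _ p hp rfl), ?_⟩
  rintro h _ p hp rfl
  exact L.mem_simN_iff_le_eqlevel.1 (h hp)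

lemma CoversSet.subset_simN_succ {L : LTS S A} {B B' : Set (S × S)} {n : ℕ}
    (hcov : L.CoversSet B' B) (hB' : B' ⊆ L.simN n) : B ⊆ L.simN (n + 1) :=
  fun p hp => L.covers_mono hB' (hcov p hp)

end LTS

theorem leastEqLev_lt_of_minExp_general {S A : Type*} (L : LTS S A)
    (B B' : Set (S × S)) (hexp : L.MinExp B B')
    (hlt : L.leastEqLev B < ⊤) :
    L.leastEqLev B' < L.leastEqLev B := by
  lift L.leastEqLev B to ℕ using hlt.ne with n hn
  by_contra! hle
  have hB : B ⊆ L.simN (n + 1) :=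
    hexp.1.subset_simN_succ (L.le_leastEqLev_iff.1 hle)
  have hsucc : ((n + 1 : ℕ) : ℕ∞) ≤ n := hn ▸ L.le_leastEqLev_iff.2 hB
  exact absurd hsucc (by norm_cast; omega)

/-- If `L` is image-finite, `B ⊐ B'` (`B'` is a minimal expansion for `B`),
and `LeastEqLev(B) < ω`, then `LeastEqLev(B) > LeastEqLev(B')`. -/
theorem leastEqLev_lt_of_minExp {S A : Type*} (L : LTS S A)
    (hfin : L.ImageFinite) (B B' : Set (S × S)) (hexp : L.MinExp B B')
    (hlt : L.leastEqLev B < ⊤) :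
    L.leastEqLev B' < L.leastEqLev B :=
  leastEqLev_lt_of_minExp_general L B B' hexp hlt
end

section
/- Let G = (N, Act, R) be a first-order grammar, let x_i be a variable and H a term over N with H ≠ x_i, and let H' be the unique term such that x_i does not occur in H' and H' = H{(x_i ↦ H')} (the limit H{(x_i,H)}{(x_i,H)}⋯). Then for every substitution σ: eqlevel(x_iσ, Hσ) = eqlevel(x_iσ, H'σ) in L^act_G. -/
/-!
Each `∼_k` is an equivalence and a congruence for substitution, and on a term whose root is a
nonterminal it gains a level: if `σ j ∼_m τ j` for all `j`, then `A(c)σ ∼_{m+1} A(c)τ`, because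
every move of `A(c)σ` is a rule for `A` and the successors are the right-hand side under the
arguments. Since `H ≠ x_i`, the same holds for `H` with `τ = σ[x_i ↦ H'σ]`, and the fixed-point
equation gives `Hτ = H'σ`. Hence `x_iσ ∼_m H'σ` implies `Hσ ∼_{m+1} H'σ`, and by induction on `k`,
`x_iσ ∼_k Hσ ↔ x_iσ ∼_k H'σ`.
-/

/-- The "signature" of a first-order grammar: a finite set of ranked nonterminals
(represented as `Fin ntCount`, with arities) and a finite set of actions
(represented as `Fin actCount`). -/
structure GrammarSig where
  ntCount : ℕ
  arity : Fin ntCount → ℕ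
  actCount : ℕ

/-- The polynomial functor whose coinductive fixed point is the set of (finite or
infinite) terms over the nonterminals: a node is labelled either by a nonterminal
`A` (with `arity A` ordered children) or by a variable `x_n`, `n : ℕ` (a leaf). -/
def GrammarSig.P (S : GrammarSig) : PFunctor :=
  ⟨Fin S.ntCount ⊕ ℕ, fun l =>
    match l with
    | Sum.inl A => Fin (S.arity A)
    | Sum.inr _ => Empty⟩

/-- Terms over the signature `S`: finite or infinite ordered trees with nodes labelled
by nonterminals (inner nodes) or variables (leaves). -/
def GTerm (S : GrammarSig) := PFunctor.M S.P

/-- The term consisting of the single variable `x_n`. -/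
def GTerm.var (S : GrammarSig) (n : ℕ) : GTerm S :=
  PFunctor.M.mk ⟨Sum.inr n, fun e => e.elim⟩

/-- The term `A(c 0, …, c (m-1))`. -/
def GTerm.app {S : GrammarSig} (A : Fin S.ntCount) (c : Fin (S.arity A) → GTerm S) :
    GTerm S :=
  PFunctor.M.mk ⟨Sum.inl A, c⟩

/-- Applying a substitution `σ` to a term `T`: every occurrence of a variable `x_n`
in `T` is replaced by `σ n` (defined corecursively). -/
def GTerm.subst {S : GrammarSig} (σ : ℕ → GTerm S) (T : GTerm S) : GTerm S :=
  PFunctor.M.corec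
    (fun st : Bool × GTerm S =>
      match PFunctor.M.dest st.2 with
      | ⟨Sum.inl A, c⟩ => ⟨Sum.inl A, fun i => (st.1, c i)⟩
      | ⟨Sum.inr n, _⟩ =>
        if st.1 then
          ⟨(PFunctor.M.dest (σ n)).1, fun i => (false, (PFunctor.M.dest (σ n)).2 i)⟩
        else ⟨Sum.inr n, fun e => e.elim⟩)
    (true, T)

/-- A substitution (as a total map `ℕ → GTerm S`) has finite support. -/
def FinSupp {S : GrammarSig} (σ : ℕ → GTerm S) : Prop :=
  {n | σ n ≠ GTerm.var S n}.Finite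

/-- `childRel S T T'`: `T'` is a root-successor (depth-1 subterm occurrence) of `T`. -/
def childRel (S : GrammarSig) : GTerm S → GTerm S → Prop := fun T T' =>
  ∃ (A : Fin S.ntCount) (c : Fin (S.arity A) → GTerm S), T = GTerm.app A c ∧ ∃ i, T' = c i

/-- `T'` is a subterm of `T`. -/
def SubtermOf (S : GrammarSig) (T' T : GTerm S) : Prop :=
  Relation.ReflTransGen (childRel S) T T'

/-- The variable `x_n` occurs in `T`. -/
def VarOccurs (S : GrammarSig) (n : ℕ) (T : GTerm S) : Prop :=
  SubtermOf S (GTerm.var S n) T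

/-- `OccAtDepth S d T V`: `V` has a subterm-occurrence in `T` at depth `d`. -/
inductive OccAtDepth (S : GrammarSig) : ℕ → GTerm S → GTerm S → Prop
  | refl (T : GTerm S) : OccAtDepth S 0 T T
  | step {d : ℕ} {T T' V : GTerm S} :
      childRel S T T' → OccAtDepth S d T' V → OccAtDepth S (d + 1) T V

/-- A term is regular if it has only finitely many distinct subterms. -/
def RegularT (S : GrammarSig) (T : GTerm S) : Prop := {T' | SubtermOf S T' T}.Finite

/-- The presentation size of a (regular) term: the number of its distinct subterms. -/
noncomputable def pressize (S : GrammarSig) (T : GTerm S) : ℕ :=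
  {T' | SubtermOf S T' T}.ncard

/-- Finite terms over the signature `S`. -/
inductive FTerm (S : GrammarSig) where
  | var : ℕ → FTerm S
  | app : (A : Fin S.ntCount) → (Fin (S.arity A) → FTerm S) → FTerm S

/-- The (finite or infinite) term corresponding to a finite term. -/
def FTerm.toTerm {S : GrammarSig} : FTerm S → GTerm S
  | .var n => GTerm.var S n
  | .app A c => GTerm.app A (fun i => (c i).toTerm)

/-- The variable `x_n` occurs in the finite term `E`. -/
def FTerm.VOccurs {S : GrammarSig} (n : ℕ) : FTerm S → Prop
  | .var m => m = n
  | .app _ c => ∃ i, (c i).VOccurs n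

/-- The depth of a finite term (the largest depth of a subterm occurrence). -/
def FTerm.depth {S : GrammarSig} : FTerm S → ℕ
  | .var _ => 0
  | .app _ c => Finset.univ.sup fun i => (c i).depth + 1

/-- A rule `A(x_0, …, x_{m−1}) →ₐ E` of a first-order grammar: `E` is a finite term
all of whose variables are among `x_0, …, x_{m−1}` where `m = arity A`. -/
structure GRule (S : GrammarSig) where
  nt : Fin S.ntCount
  act : Fin S.actCount
  rhs : FTerm S
  rhs_wf : ∀ n : ℕ, rhs.VOccurs n → n < S.arity nt

/-- A first-order grammar: a signature together with a finite set (list) of rules. -/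
structure FOGrammar where
  sig : GrammarSig
  rules : List (GRule sig)

/-- The term `A(x_0, …, x_{m−1})` (the left-hand side of rules for `A`). -/
def lhsTerm {S : GrammarSig} (A : Fin S.ntCount) : GTerm S :=
  GTerm.app A fun i => GTerm.var S i.val

/-- The rule-based LTS `L^rul_G`: states are the terms, actions are the rules of `G`,
and a rule `r : A(x_0,…,x_{m−1}) →ₐ E` induces `(A(x_0,…,x_{m−1}))σ →r Eσ` for every
substitution `σ`. -/
def LTSrul (G : FOGrammar) : LTS (GTerm G.sig) (GRule G.sig) where
  Tr r T T' := r ∈ G.rules ∧ ∃ σ : ℕ → GTerm G.sig, FinSupp σ ∧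
    T = GTerm.subst σ (lhsTerm r.nt) ∧ T' = GTerm.subst σ r.rhs.toTerm

/-- The action-based LTS `L^act_G`: the transitions of `L^rul_G` relabelled by the
actions of the rules; in addition each variable `x_n` has its own fresh action
(represented by `Sum.inr n`) with the single transition `x_n →_{a_{x_n}} x_n`. -/
def LTSact (G : FOGrammar) : LTS (GTerm G.sig) (Fin G.sig.actCount ⊕ ℕ) where
  Tr a T T' :=
    match a with
    | Sum.inl a => ∃ r : GRule G.sig, r.act = a ∧ (LTSrul G).Tr r T T'
    | Sum.inr n => T = GTerm.var G.sig n ∧ T' = GTerm.var G.sig n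

/-- `RPath G T w T'`: the path `T →w T'` in the rule-based LTS `L^rul_G`, `w ∈ R*`. -/
inductive RPath (G : FOGrammar) : GTerm G.sig → List (GRule G.sig) → GTerm G.sig → Prop
  | nil (T : GTerm G.sig) : RPath G T [] T
  | cons {T T1 T' : GTerm G.sig} {r : GRule G.sig} {w : List (GRule G.sig)} :
      (LTSrul G).Tr r T T1 → RPath G T1 w T' → RPath G T (r :: w) T'

/-- `APath G T w T'`: the path `T →w T'` in the action-based LTS `L^act_G` for a word
`w ∈ Act*` of proper actions (using no special variable transitions). -/
inductive APath (G : FOGrammar) :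
    GTerm G.sig → List (Fin G.sig.actCount) → GTerm G.sig → Prop
  | nil (T : GTerm G.sig) : APath G T [] T
  | cons {T T1 T' : GTerm G.sig} {a : Fin G.sig.actCount} {w : List (Fin G.sig.actCount)} :
      (LTSact G).Tr (Sum.inl a) T T1 → APath G T1 w T' → APath G T (a :: w) T'

/-- The substitution that (only) replaces the variable `x_i` by `K`. -/
def singleSub {S : GrammarSig} (i : ℕ) (K : GTerm S) : ℕ → GTerm S :=
  fun j => if j = i then K else GTerm.var S j

namespace GTerm
variable {S : GrammarSig}

theorem var_ne_app {n : ℕ} {A : Fin S.ntCount} {c : Fin (S.arity A) → GTerm S} :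
    var S n ≠ app A c := fun h => by
  simpa using congrArg Sigma.fst (PFunctor.M.mk_inj h)

theorem eq_of_app_eq_app {A B : Fin S.ntCount} {c : Fin (S.arity A) → GTerm S}
    {d : Fin (S.arity B) → GTerm S} (h : app A c = app B d) : A = B :=
  Sum.inl.inj (congrArg Sigma.fst (PFunctor.M.mk_inj h))

theorem app_injective (A : Fin S.ntCount) : Function.Injective (app (S := S) A) := fun _ _ h =>
  eq_of_heq (Sigma.mk.inj_iff.mp (PFunctor.M.mk_inj h)).2

theorem exists_eq_var_or_app (T : GTerm S) : (∃ n, T = var S n) ∨ ∃ A c, T = app A c := by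
  rw [← PFunctor.M.mk_dest T]
  rcases PFunctor.M.dest (F := S.P) T with ⟨A | n, c⟩
  · exact .inr ⟨A, c, rfl⟩
  · exact .inl ⟨n, congrArg _ (congrArg _ (funext fun e => e.elim))⟩

theorem eq_of_bisim (R : GTerm S → GTerm S → Prop)
    (h : ∀ x y, R x y → x = y ∨ ∃ A c d, x = app A c ∧ y = app A d ∧ ∀ j, R (c j) (d j))
    {x y : GTerm S} (hxy : R x y) : x = y := by
  refine PFunctor.M.bisim (fun x y => R x y ∨ x = y) ?_ x y (.inl hxy)
  rintro x y (hR | rfl)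
  · rcases h x y hR with rfl | ⟨A, c, d, rfl, rfl, hcd⟩
    · exact ⟨_, _, _, rfl, rfl, fun _ => .inr rfl⟩
    · exact ⟨Sum.inl A, c, d, rfl, rfl, fun j => .inl (hcd j)⟩
  · exact ⟨_, _, _, rfl, rfl, fun _ => .inr rfl⟩

/-- The step function inside `GTerm.subst`, named so that `subst_eq_corec` is `rfl`. The flag
turns `false` once we are inside some `σ n`, which is then copied unchanged. -/
def substStep (σ : ℕ → GTerm S) (st : Bool × GTerm S) : S.P.Obj (Bool × GTerm S) :=
  match PFunctor.M.dest st.2 with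
  | ⟨Sum.inl A, c⟩ => ⟨Sum.inl A, fun i => (st.1, c i)⟩
  | ⟨Sum.inr n, _⟩ =>
    if st.1 then
      ⟨(PFunctor.M.dest (σ n)).1, fun i => (false, (PFunctor.M.dest (σ n)).2 i)⟩
    else ⟨Sum.inr n, fun e => e.elim⟩

theorem subst_eq_corec (σ : ℕ → GTerm S) (T : GTerm S) :
    subst σ T = PFunctor.M.corec (substStep σ) (true, T) := rfl

theorem corec_substStep_app (σ : ℕ → GTerm S) (b : Bool) {A : Fin S.ntCount}
    (c : Fin (S.arity A) → GTerm S) :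
    PFunctor.M.corec (substStep σ) (b, app A c) =
      app A fun j => PFunctor.M.corec (substStep σ) (b, c j) := by
  rw [PFunctor.M.corec_def]
  rfl

theorem corec_substStep_false (σ : ℕ → GTerm S) (U : GTerm S) :
    PFunctor.M.corec (substStep σ) (false, U) = U := by
  refine eq_of_bisim (fun x y => x = PFunctor.M.corec (substStep σ) (false, y)) ?_ rfl
  rintro x y rfl
  rcases exists_eq_var_or_app y with ⟨n, rfl⟩ | ⟨A, c, rfl⟩
  · refine .inl ?_
    rw [PFunctor.M.corec_def]
    exact congrArg (fun f : Empty → GTerm S => PFunctor.M.mk (F := S.P) ⟨Sum.inr n, f⟩)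
      (funext fun e => e.elim)
  · exact .inr ⟨A, _, c, corec_substStep_app σ false c, rfl, fun _ => rfl⟩

@[simp]
theorem subst_var (σ : ℕ → GTerm S) (n : ℕ) : subst σ (var S n) = σ n := by
  rw [subst_eq_corec, PFunctor.M.corec_def]
  conv_rhs => rw [← PFunctor.M.mk_dest (σ n)]
  exact congrArg _ (congrArg _ (funext fun i => corec_substStep_false σ _))

theorem subst_app (σ : ℕ → GTerm S) {A : Fin S.ntCount} (c : Fin (S.arity A) → GTerm S) :
    subst σ (app A c) = app A fun j => subst σ (c j) :=
  corec_substStep_app σ true c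

theorem subst_subst (σ ρ : ℕ → GTerm S) (T : GTerm S) :
    subst σ (subst ρ T) = subst (fun n => subst σ (ρ n)) T := by
  refine eq_of_bisim (fun x y => ∃ T, x = subst σ (subst ρ T) ∧
    y = subst (fun n => subst σ (ρ n)) T) ?_ ⟨T, rfl, rfl⟩
  rintro x y ⟨T, rfl, rfl⟩
  rcases exists_eq_var_or_app T with ⟨n, rfl⟩ | ⟨A, c, rfl⟩
  · exact .inl (by simp only [subst_var])
  · simp only [subst_app]
    exact .inr ⟨A, _, _, rfl, rfl, fun j => ⟨c j, rfl, rfl⟩⟩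

theorem subst_lhsTerm (σ : ℕ → GTerm S) (A : Fin S.ntCount) :
    subst σ (lhsTerm A) = app A fun j => σ j := by
  simp only [lhsTerm, subst_app, subst_var]

theorem subst_toTerm_congr {σ τ : ℕ → GTerm S} (E : FTerm S)
    (h : ∀ n, E.VOccurs n → σ n = τ n) : subst σ E.toTerm = subst τ E.toTerm := by
  induction E with
  | var n => simpa only [FTerm.toTerm, subst_var] using h n rfl
  | app A c ih =>
    simp only [FTerm.toTerm, subst_app]
    exact congrArg _ (funext fun i => ih i fun n hn => h n ⟨i, hn⟩)

/-- Instantiates the left-hand side `A(x_0, …, x_{m-1})` of a rule to `A(d)`. -/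
def argSubst {A : Fin S.ntCount} (d : Fin (S.arity A) → GTerm S) (j : ℕ) : GTerm S :=
  if h : j < S.arity A then d ⟨j, h⟩ else var S j

@[simp]
theorem argSubst_val {A : Fin S.ntCount} (d : Fin (S.arity A) → GTerm S) (j : Fin (S.arity A)) :
    argSubst d j = d j :=
  dif_pos j.isLt

theorem finSupp_argSubst {A : Fin S.ntCount} (d : Fin (S.arity A) → GTerm S) :
    FinSupp (argSubst d) :=
  (Set.finite_Iio (S.arity A)).subset fun j hj => by
    by_contra hlt
    exact hj (dif_neg hlt)

end GTerm

namespace LTS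
variable {St Ac : Type*} (L : LTS St Ac)

theorem covers_mono_s12 {B B' : Set (St × St)} (h : B ⊆ B') {p : St × St} (hc : L.Covers B p) :
    L.Covers B' p :=
  ⟨fun a s' hs => let ⟨t', ht, hB⟩ := hc.1 a s' hs; ⟨t', ht, h hB⟩,
   fun a t' ht => let ⟨s', hs, hB⟩ := hc.2 a t' ht; ⟨s', hs, h hB⟩⟩

theorem simN_succ_subset : ∀ k, L.simN (k + 1) ⊆ L.simN k
  | 0 => Set.subset_univ _
  | k + 1 => fun _ hp => L.covers_mono_s12 (simN_succ_subset k) hp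

theorem simN_refl : ∀ k (s : St), (s, s) ∈ L.simN k
  | 0, _ => trivial
  | k + 1, _ => ⟨fun _ s' hs => ⟨s', hs, simN_refl k s'⟩, fun _ t' ht => ⟨t', ht, simN_refl k t'⟩⟩

theorem simN_symm : ∀ k {s t : St}, (s, t) ∈ L.simN k → (t, s) ∈ L.simN k
  | 0, _, _, _ => trivial
  | k + 1, _, _, h =>
    ⟨fun a t' ht => let ⟨s', hs, hB⟩ := h.2 a t' ht; ⟨s', hs, simN_symm k hB⟩,
     fun a s' hs => let ⟨t', ht, hB⟩ := h.1 a s' hs; ⟨t', ht, simN_symm k hB⟩⟩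

theorem simN_trans : ∀ k {s t u : St},
    (s, t) ∈ L.simN k → (t, u) ∈ L.simN k → (s, u) ∈ L.simN k
  | 0, _, _, _, _, _ => trivial
  | k + 1, _, _, _, hst, htu =>
    ⟨fun a s' hs =>
      let ⟨t', ht, hst'⟩ := hst.1 a s' hs
      let ⟨u', hu, htu'⟩ := htu.1 a t' ht
      ⟨u', hu, simN_trans k hst' htu'⟩,
     fun a u' hu =>
      let ⟨t', ht, htu'⟩ := htu.2 a u' hu
      let ⟨s', hs, hst'⟩ := hst.2 a t' ht
      ⟨s', hs, simN_trans k hst' htu'⟩⟩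

theorem eqlevel_eq_of_forall_simN_succ {s t u : St}
    (h : ∀ m, (s, u) ∈ L.simN m → (t, u) ∈ L.simN (m + 1)) :
    L.eqlevel s t = L.eqlevel s u := by
  have hiff : ∀ k, (s, t) ∈ L.simN k ↔ (s, u) ∈ L.simN k := by
    intro k
    induction k with
    | zero => exact Iff.rfl
    | succ m ih =>
      constructor
      · intro hst
        exact L.simN_trans _ hst (h m (ih.mp (L.simN_succ_subset m hst)))
      · intro hsu
        exact L.simN_trans _ hsu (L.simN_symm _ (h m (L.simN_succ_subset m hsu)))
  simp only [eqlevel, hiff]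

end LTS

namespace LTSact
open GTerm
variable {G : FOGrammar}

theorem tr_inl_app_iff {a : Fin G.sig.actCount} {A : Fin G.sig.ntCount}
    {d : Fin (G.sig.arity A) → GTerm G.sig} {U : GTerm G.sig} :
    (LTSact G).Tr (.inl a) (app A d) U ↔
      ∃ r ∈ G.rules, r.act = a ∧ r.nt = A ∧ U = subst (argSubst d) r.rhs.toTerm := by
  constructor
  · rintro ⟨r, rfl, hr, ρ, -, hlhs, rfl⟩
    rw [subst_lhsTerm] at hlhs
    obtain rfl := eq_of_app_eq_app hlhs
    have hρ := congrFun (app_injective _ hlhs)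
    refine ⟨r, hr, rfl, rfl, subst_toTerm_congr _ fun n hn => ?_⟩
    have hlt := r.rhs_wf n hn
    simp only [argSubst, dif_pos hlt, hρ]
  · rintro ⟨r, hr, rfl, rfl, rfl⟩
    refine ⟨r, rfl, hr, argSubst d, finSupp_argSubst d, ?_, rfl⟩
    rw [subst_lhsTerm]
    exact congrArg _ (funext fun j => (argSubst_val d j).symm)

theorem not_tr_inr_app {n : ℕ} {A : Fin G.sig.ntCount} {d : Fin (G.sig.arity A) → GTerm G.sig}
    {U : GTerm G.sig} : ¬ (LTSact G).Tr (.inr n) (app A d) U :=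
  fun h => var_ne_app h.1.symm

variable (G) in
def SubstCongr (m : ℕ) : Prop :=
  ∀ σ τ : ℕ → GTerm G.sig, (∀ j, (σ j, τ j) ∈ (LTSact G).simN m) →
    ∀ T, (subst σ T, subst τ T) ∈ (LTSact G).simN m

theorem exists_tr_app_of_tr_app {m : ℕ} (hcong : SubstCongr G m) {A : Fin G.sig.ntCount}
    {d d' : Fin (G.sig.arity A) → GTerm G.sig} (hd : ∀ j, (d j, d' j) ∈ (LTSact G).simN m)
    {a : Fin G.sig.actCount ⊕ ℕ} {U : GTerm G.sig} (hU : (LTSact G).Tr a (app A d) U) :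
    ∃ V, (LTSact G).Tr a (app A d') V ∧ (U, V) ∈ (LTSact G).simN m := by
  rcases a with a | n
  · obtain ⟨r, hr, hact, hnt, rfl⟩ := tr_inl_app_iff.mp hU
    refine ⟨_, tr_inl_app_iff.mpr ⟨r, hr, hact, hnt, rfl⟩, hcong _ _ (fun j => ?_) _⟩
    unfold argSubst
    split_ifs
    · exact hd _
    · exact (LTSact G).simN_refl m _
  · exact absurd hU not_tr_inr_app

/-- The root nonterminal moves first, so related arguments become related one level higher. -/
theorem app_mem_simN_succ {m : ℕ} (hcong : SubstCongr G m) {A : Fin G.sig.ntCount}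
    {d d' : Fin (G.sig.arity A) → GTerm G.sig} (hd : ∀ j, (d j, d' j) ∈ (LTSact G).simN m) :
    (app A d, app A d') ∈ (LTSact G).simN (m + 1) := by
  refine ⟨fun a U hU => exists_tr_app_of_tr_app hcong hd hU, fun a V hV => ?_⟩
  obtain ⟨U, hU, hVU⟩ :=
    exists_tr_app_of_tr_app hcong (fun j => (LTSact G).simN_symm m (hd j)) hV
  exact ⟨U, hU, (LTSact G).simN_symm m hVU⟩

theorem substCongr : ∀ m, SubstCongr G m
  | 0 => fun _ _ _ _ => trivial
  | m + 1 => fun σ τ hστ T => by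
    rcases exists_eq_var_or_app T with ⟨n, rfl⟩ | ⟨A, c, rfl⟩
    · simpa only [subst_var] using hστ n
    · simp only [subst_app]
      have hm j := (LTSact G).simN_succ_subset m (hστ j)
      exact app_mem_simN_succ (substCongr m) fun j => substCongr m σ τ hm (c j)

theorem subst_update_mem_simN_succ {i m : ℕ} {H : GTerm G.sig} (hH : H ≠ var G.sig i)
    (σ : ℕ → GTerm G.sig) {u : GTerm G.sig} (hu : (σ i, u) ∈ (LTSact G).simN m) :
    (subst σ H, subst (Function.update σ i u) H) ∈ (LTSact G).simN (m + 1) := by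
  rcases exists_eq_var_or_app H with ⟨n, rfl⟩ | ⟨A, c, rfl⟩
  · have hn : n ≠ i := fun h => hH (h ▸ rfl)
    simpa only [subst_var, Function.update_of_ne hn] using (LTSact G).simN_refl _ (σ n)
  · have hστ : ∀ j, (σ j, Function.update σ i u j) ∈ (LTSact G).simN m := by
      intro j
      rcases eq_or_ne j i with rfl | hj
      · simpa only [Function.update_self] using hu
      · simpa only [Function.update_of_ne hj] using (LTSact G).simN_refl m (σ j)
    simp only [subst_app]
    exact app_mem_simN_succ (substCongr m) fun j => substCongr m _ _ hστ (c j)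

end LTSact

theorem eqlevel_limit_subst_general (G : FOGrammar) (i : ℕ) (H H' : GTerm G.sig)
    (hH : H ≠ GTerm.var G.sig i)
    (hfix : H' = GTerm.subst (singleSub i H') H) :
    ∀ σ : ℕ → GTerm G.sig, FinSupp σ →
      (LTSact G).eqlevel (σ i) (GTerm.subst σ H) =
        (LTSact G).eqlevel (σ i) (GTerm.subst σ H') := by
  intro σ _
  have hlimit : GTerm.subst (Function.update σ i (GTerm.subst σ H')) H = GTerm.subst σ H' := by
    conv_rhs => rw [hfix, GTerm.subst_subst]
    congr 1
    funext n
    rcases eq_or_ne n i with rfl | hn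
    · simp only [Function.update_self, singleSub, if_true]
    · simp only [Function.update_of_ne hn, singleSub, if_neg hn, GTerm.subst_var]
  refine (LTSact G).eqlevel_eq_of_forall_simN_succ fun m hm => ?_
  simpa only [hlimit] using LTSact.subst_update_mem_simN_succ hH σ hm

/-- let `H ≠ x_i` and let `H'` be the (unique) term in which `x_i` does
not occur and with `H' = H{(x_i ↦ H')}` (the limit `H{(x_i,H)}{(x_i,H)}⋯`). Then for
every substitution `σ`: `eqlevel(x_iσ, Hσ) = eqlevel(x_iσ, H'σ)` in `L^act_G`. -/
theorem eqlevel_limit_subst (G : FOGrammar) (i : ℕ) (H H' : GTerm G.sig)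
    (hH : H ≠ GTerm.var G.sig i)
    (hocc : ¬ VarOccurs G.sig i H')
    (hfix : H' = GTerm.subst (singleSub i H') H) :
    ∀ σ : ℕ → GTerm G.sig, FinSupp σ →
      (LTSact G).eqlevel (σ i) (GTerm.subst σ H) =
        (LTSact G).eqlevel (σ i) (GTerm.subst σ H') :=
  eqlevel_limit_subst_general G i H H' hH hfix
end
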